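/- arXiv:2404.16468 — 3 statements merged into one kernel-verified Lean document; each statement's English description precedes it below -/
import Mathlib

section
/- Assume the action-density-bounded dual LP is feasible. Let (d*, p*) be an optimal solution of the action-density-bounded dual LP with derived policy π*(a|s) = p*(s,a)/d*(s), and let (v*, q*, r_lb*, r_ub*) be an optimal solution of the action-density-bounded primal LP. Then π* is greedy with respect to the optimal adjusted value function: for every state s, every action a with π*(a|s) > 0 satisfies a ∈ argmax_{a'} q*(s,a'). -/
open Finset

section MDPDefs

variable {S A : Type*}

/-- A (stationary, stochastic) policy on finite state/action spaces. -/
def IsPolicy [Fintype A] (π : S → A → ℝ) : Prop :=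
  (∀ s a, 0 ≤ π s a) ∧ ∀ s, ∑ a, π s a = 1

/-- `d` is the (discounted) state visitation density of the policy `π`:
it satisfies `d(s) = (1-γ)ι(s) + γ Σ_{s',a'} d(s') π(a'|s') τ(s|s',a')`. -/
def IsVisit [Fintype S] [Fintype A] (ι : S → ℝ) (τ : S → A → S → ℝ) (γ : ℝ)
    (π : S → A → ℝ) (d : S → ℝ) : Prop :=
  ∀ s, d s = (1 - γ) * ι s + γ * ∑ s', ∑ a', d s' * π s' a' * τ s' a' s

/-- Feasibility for the value-learning dual LP. -/
def DualFeas [Fintype S] [Fintype A] (ι : S → ℝ) (τ : S → A → S → ℝ) (γ : ℝ)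
    (d : S → ℝ) (p : S → A → ℝ) : Prop :=
  (∀ s, ∑ a, p s a = d s) ∧
  (∀ s, d s = (1 - γ) * ι s + γ * ∑ s', ∑ a', p s' a' * τ s' a' s) ∧
  ∀ s a, 0 ≤ p s a

/-- The dual objective: the average reward under the state-action density `p`,
`Σ_{s,a} p(s,a) Σ_{s'} τ(s'|s,a) r(s,a,s')`. -/
def DualObj [Fintype S] [Fintype A] (τ : S → A → S → ℝ) (r : S → A → S → ℝ)
    (p : S → A → ℝ) : ℝ :=
  ∑ s, ∑ a, p s a * ∑ s', τ s a s' * r s a s'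

/-- The standing MDP assumptions: `ι` is an everywhere-positive initial-state
distribution, `τ(·|s,a)` are transition probabilities and `γ ∈ [0,1)`. -/
def IsMDP [Fintype S] [Fintype A] (ι : S → ℝ) (τ : S → A → S → ℝ) (γ : ℝ) : Prop :=
  (∀ s, 0 < ι s) ∧ (∑ s, ι s = 1) ∧
  (∀ s a s', 0 ≤ τ s a s') ∧ (∀ s a, ∑ s', τ s a s' = 1) ∧
  0 ≤ γ ∧ γ < 1

end MDPDefs


/-- Inner LP: existence of a box-feasible distribution that is greedy on a threshold. -/
lemma adb_inner_lp {A : Type*} [Fintype A] [Nonempty A]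
    (lb ub z : A → ℝ) (hle : ∀ a, lb a ≤ ub a)
    (hlb1 : ∑ a, lb a ≤ 1) (hub1 : 1 ≤ ∑ a, ub a) :
    ∃ (μ : A → ℝ) (t : ℝ),
      (∀ a, lb a ≤ μ a) ∧ (∀ a, μ a ≤ ub a) ∧ (∑ a, μ a = 1) ∧
      (∀ a, t < z a → μ a = ub a) ∧ (∀ a, z a < t → μ a = lb a) := by
  classical
  set Z : Finset ℝ := Finset.image z Finset.univ with hZ
  have hZne : Z.Nonempty := ⟨z (Classical.arbitrary A), by simp [hZ]⟩
  set H : ℝ → ℝ := fun t => ∑ a, (if t < z a then ub a else lb a) with hH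
  set Q : Finset ℝ := Z.filter (fun t => H t ≤ 1) with hQ
  have hQne : Q.Nonempty := by
    refine ⟨Z.max' hZne, ?_⟩
    rw [hQ, Finset.mem_filter]
    refine ⟨Z.max'_mem hZne, ?_⟩
    have : H (Z.max' hZne) = ∑ a, lb a := by
      apply Finset.sum_congr rfl
      intro a _
      rw [if_neg]
      push_neg
      exact Z.le_max' _ (by simp [hZ])
    rw [this]; exact hlb1
  set t : ℝ := Q.min' hQne with ht
  have htQ : t ∈ Q := Q.min'_mem hQne
  have htZ : t ∈ Z := (Finset.mem_filter.mp htQ).1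
  have hHt : H t ≤ 1 := (Finset.mem_filter.mp htQ).2
  -- lower bound : 1 ≤ H⁻(t) = ∑ a, if t ≤ z a then ub a else lb a
  have hHm : 1 ≤ ∑ a, (if t ≤ z a then ub a else lb a) := by
    by_cases hbel : ∃ u ∈ Z, u < t
    · obtain ⟨u, huZ, hut⟩ := hbel
      set Z' : Finset ℝ := Z.filter (fun u => u < t) with hZ'
      have hZ'ne : Z'.Nonempty := ⟨u, by simp [hZ', huZ, hut]⟩
      set t' : ℝ := Z'.max' hZ'ne with ht'
      have ht'Z : t' ∈ Z := (Finset.mem_filter.mp (Z'.max'_mem hZ'ne)).1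
      have ht't : t' < t := (Finset.mem_filter.mp (Z'.max'_mem hZ'ne)).2
      have ht'nQ : ¬ (H t' ≤ 1) := by
        intro hcon
        have : t ≤ t' := Q.min'_le t' (by rw [hQ, Finset.mem_filter]; exact ⟨ht'Z, hcon⟩)
        linarith
      have heq : H t' = ∑ a, (if t ≤ z a then ub a else lb a) := by
        apply Finset.sum_congr rfl
        intro a _
        by_cases hza : t ≤ z a
        · rw [if_pos (lt_of_lt_of_le ht't hza), if_pos hza]
        · push_neg at hza
          have : z a ≤ t' := Z'.le_max' (z a) (by simp [hZ', hZ, hza])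
          rw [if_neg (by linarith), if_neg (by linarith)]
      linarith [le_of_not_ge ht'nQ, heq ▸ le_of_not_ge ht'nQ]
    · push_neg at hbel
      have heq : ∑ a, (if t ≤ z a then ub a else lb a) = ∑ a, ub a := by
        apply Finset.sum_congr rfl
        intro a _
        exact if_pos (hbel (z a) (by simp [hZ]))
      linarith
  -- tie set capacity
  set E : Finset A := Finset.univ.filter (fun a => z a = t) with hE
  set c : ℝ := ∑ a ∈ E, (ub a - lb a) with hc
  set m : ℝ := 1 - H t with hm
  have hc0 : 0 ≤ c := Finset.sum_nonneg (fun a _ => by linarith [hle a])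
  have hm0 : 0 ≤ m := by rw [hm]; linarith
  have hmc : m ≤ c := by
    have hsplit : (∑ a, (if t ≤ z a then ub a else lb a)) = H t + c := by
      rw [hH, hc]
      have : ∑ a ∈ E, (ub a - lb a) = ∑ a, (if z a = t then ub a - lb a else 0) := by
        rw [hE, Finset.sum_filter]
      rw [this, ← Finset.sum_add_distrib]
      apply Finset.sum_congr rfl
      intro a _
      by_cases h1 : t < z a
      · rw [if_pos (le_of_lt h1), if_pos h1, if_neg (by linarith), add_zero]
      · push_neg at h1
        by_cases h2 : z a = t
        · rw [if_pos (le_of_eq h2.symm), if_neg (by linarith), if_pos h2]; ring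
        · have : z a < t := lt_of_le_of_ne h1 h2
          rw [if_neg (by linarith), if_neg (by linarith), if_neg h2, add_zero]
    rw [hm]; linarith [hsplit ▸ hHm]
  set θ : ℝ := if c = 0 then 0 else m / c with hθ
  have hθ0 : 0 ≤ θ := by
    rw [hθ]; split
    · exact le_refl 0
    · exact div_nonneg hm0 hc0
  have hθ1 : θ ≤ 1 := by
    rw [hθ]; split
    · exact zero_le_one
    · rename_i hcne
      exact (div_le_one (lt_of_le_of_ne hc0 (Ne.symm hcne))).mpr hmc
  have hθc : θ * c = m := by
    rw [hθ]; split
    · rename_i hc0'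
      have : m = 0 := le_antisymm (by linarith) hm0
      rw [this, zero_mul]
    · rename_i hcne
      field_simp
  refine ⟨fun a => if t < z a then ub a else if z a < t then lb a else
    lb a + θ * (ub a - lb a), t, ?_, ?_, ?_, ?_, ?_⟩
  · intro a
    dsimp only
    by_cases h1 : t < z a
    · rw [if_pos h1]; exact hle a
    · rw [if_neg h1]
      by_cases h2 : z a < t
      · rw [if_pos h2]
      · rw [if_neg h2]
        nlinarith [hle a]
  · intro a
    dsimp only
    by_cases h1 : t < z a
    · rw [if_pos h1]
    · rw [if_neg h1]
      by_cases h2 : z a < t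
      · rw [if_pos h2]; exact hle a
      · rw [if_neg h2]
        nlinarith [hle a]
  · have hterm : ∀ a, (if t < z a then ub a else if z a < t then lb a else
        lb a + θ * (ub a - lb a))
        = (if t < z a then ub a else lb a) + (if z a = t then θ * (ub a - lb a) else 0) := by
      intro a
      by_cases h1 : t < z a
      · rw [if_pos h1, if_pos h1, if_neg (by linarith), add_zero]
      · rw [if_neg h1, if_neg h1]
        by_cases h2 : z a < t
        · rw [if_pos h2, if_neg (by linarith), add_zero]
        · push_neg at h1 h2
          rw [if_neg (not_lt.mpr h2), if_pos (le_antisymm h1 h2)]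
    rw [Finset.sum_congr rfl (fun a _ => hterm a), Finset.sum_add_distrib]
    have h2 : ∑ a, (if z a = t then θ * (ub a - lb a) else 0) = θ * c := by
      rw [hc, hE, Finset.sum_filter, Finset.mul_sum]
      apply Finset.sum_congr rfl
      intro a _
      split <;> simp
    rw [h2, hθc]
    rw [hm] at *
    show H t + (1 - H t) = 1
    ring
  · intro a h1
    dsimp only
    rw [if_pos h1]
  · intro a h2
    dsimp only
    rw [if_neg (not_lt.mpr (le_of_lt h2)), if_pos h2]

/-- Existence of the optimal adjusted value function together with a greedy
threshold policy. -/
lemma adb_exists_fixed {S A : Type*} [Fintype S] [Fintype A] [Nonempty S] [Nonempty A]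
    (τ : S → A → S → ℝ) (γ : ℝ) (r : S → A → S → ℝ)
    (lb ub : S → A → ℝ)
    (hτ0 : ∀ s a s', 0 ≤ τ s a s') (hτ1 : ∀ s a, ∑ s', τ s a s' = 1)
    (hγ0 : 0 ≤ γ) (hγ1 : γ < 1)
    (hlb0 : ∀ s a, 0 ≤ lb s a) (hle : ∀ s a, lb s a ≤ ub s a)
    (hlb1 : ∀ s, ∑ a, lb s a ≤ 1) (hub1 : ∀ s, 1 ≤ ∑ a, ub s a) :
    ∃ (v : S → ℝ) (π : S → A → ℝ) (t : S → ℝ),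
      (∀ s a, lb s a ≤ π s a) ∧ (∀ s a, π s a ≤ ub s a) ∧ (∀ s, ∑ a, π s a = 1) ∧
      (∀ s a, t s < (∑ s', τ s a s' * r s a s') + γ * ∑ s', τ s a s' * v s' →
        π s a = ub s a) ∧
      (∀ s a, (∑ s', τ s a s' * r s a s') + γ * ∑ s', τ s a s' * v s' < t s →
        π s a = lb s a) ∧
      (∀ s, v s = ∑ a, π s a *
        ((∑ s', τ s a s' * r s a s') + γ * ∑ s', τ s a s' * v s')) := by
  classical
  have key : ∀ (s : S) (z : A → ℝ), ∃ (μ : A → ℝ) (t : ℝ),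
      (∀ a, lb s a ≤ μ a) ∧ (∀ a, μ a ≤ ub s a) ∧ (∑ a, μ a = 1) ∧
      (∀ a, t < z a → μ a = ub s a) ∧ (∀ a, z a < t → μ a = lb s a) :=
    fun s z => adb_inner_lp (lb s) (ub s) z (hle s) (hlb1 s) (hub1 s)
  choose μf tf hμlb hμub hμsum hgt hlt using key
  set zf : (S → ℝ) → S → A → ℝ :=
    fun v s a => (∑ s', τ s a s' * r s a s') + γ * ∑ s', τ s a s' * v s' with hzf
  set M : S → (A → ℝ) → ℝ := fun s z => ∑ a, μf s z a * z a with hM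
  set T : (S → ℝ) → (S → ℝ) := fun v s => M s (zf v s) with hT
  -- inner optimality
  have hopt : ∀ (s : S) (z μ : A → ℝ), (∀ a, lb s a ≤ μ a) → (∀ a, μ a ≤ ub s a) →
      (∑ a, μ a = 1) → ∑ a, μ a * z a ≤ M s z := by
    intro s z μ hl hu hs
    have h1 : ∑ a, μ a * z a - M s z = ∑ a, (μ a - μf s z a) * (z a - tf s z) := by
      have : ∀ a ∈ Finset.univ, (μ a - μf s z a) * (z a - tf s z)
          = (μ a * z a - μf s z a * z a) - (μ a - μf s z a) * tf s z := by
        intro a _; ring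
      rw [Finset.sum_congr rfl this, Finset.sum_sub_distrib, Finset.sum_sub_distrib,
        ← Finset.sum_mul, Finset.sum_sub_distrib, hs, hμsum s z]
      simp [hM]
    have h2 : ∑ a, (μ a - μf s z a) * (z a - tf s z) ≤ 0 := by
      apply Finset.sum_nonpos
      intro a _
      rcases lt_trichotomy (z a) (tf s z) with h | h | h
      · rw [hlt s z a h]
        apply mul_nonpos_of_nonneg_of_nonpos
        · linarith [hl a]
        · linarith
      · rw [h]; simp
      · rw [hgt s z a h]
        apply mul_nonpos_of_nonpos_of_nonneg
        · linarith [hu a]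
        · linarith
    linarith
  -- Lipschitz of M
  have hMlip : ∀ (s : S) (z z' : A → ℝ) (C : ℝ), 0 ≤ C → (∀ a, |z a - z' a| ≤ C) →
      |M s z - M s z'| ≤ C := by
    intro s z z' C hC h
    have haux : ∀ (w w' : A → ℝ), (∀ a, |w a - w' a| ≤ C) → M s w - M s w' ≤ C := by
      intro w w' hw
      have h1 : M s w' ≥ ∑ a, μf s w a * w' a :=
        hopt s w' (μf s w) (hμlb s w) (hμub s w) (hμsum s w)
      have h2 : M s w - ∑ a, μf s w a * w' a = ∑ a, μf s w a * (w a - w' a) := by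
        rw [hM]
        rw [← Finset.sum_sub_distrib]
        apply Finset.sum_congr rfl
        intro a _; ring
      have h3 : ∑ a, μf s w a * (w a - w' a) ≤ ∑ a, μf s w a * C := by
        apply Finset.sum_le_sum
        intro a _
        apply mul_le_mul_of_nonneg_left _ (le_trans (hlb0 s a) (hμlb s w a))
        exact le_trans (le_abs_self _) (hw a)
      have h4 : ∑ a, μf s w a * C = C := by
        rw [← Finset.sum_mul, hμsum s w, one_mul]
      linarith
    rw [abs_sub_le_iff]
    constructor
    · exact haux z z' h
    · exact haux z' z (fun a => by rw [abs_sub_comm]; exact h a)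
  -- contraction
  have hcon : ContractingWith ⟨γ, hγ0⟩ T := by
    constructor
    · exact_mod_cast hγ1
    · apply LipschitzWith.of_dist_le_mul
      intro v w
      show dist (T v) (T w) ≤ γ * dist v w
      have hd0 : 0 ≤ (γ : ℝ) * dist v w := mul_nonneg hγ0 dist_nonneg
      rw [dist_pi_le_iff hd0]
      intro s
      rw [Real.dist_eq]
      apply hMlip s _ _ _ hd0
      intro a
      have : zf v s a - zf w s a = γ * ∑ s', τ s a s' * (v s' - w s') := by
        have e1 : (∑ s', γ * (τ s a s' * v s')) - (∑ s', γ * (τ s a s' * w s'))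
            = ∑ s', γ * (τ s a s' * (v s' - w s')) := by
          rw [← Finset.sum_sub_distrib]
          exact Finset.sum_congr rfl (fun s' _ => by ring)
        calc zf v s a - zf w s a
            = (∑ s', γ * (τ s a s' * v s')) - (∑ s', γ * (τ s a s' * w s')) := by
              rw [hzf]; simp only [Finset.mul_sum]; ring
          _ = ∑ s', γ * (τ s a s' * (v s' - w s')) := e1
          _ = γ * ∑ s', τ s a s' * (v s' - w s') := by rw [Finset.mul_sum]
      rw [this, abs_mul, abs_of_nonneg hγ0]
      apply mul_le_mul_of_nonneg_left _ hγ0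
      calc |∑ s', τ s a s' * (v s' - w s')| ≤ ∑ s', |τ s a s' * (v s' - w s')| :=
            Finset.abs_sum_le_sum_abs _ _
        _ ≤ ∑ s', τ s a s' * dist v w := by
            apply Finset.sum_le_sum
            intro s' _
            rw [abs_mul, abs_of_nonneg (hτ0 s a s')]
            apply mul_le_mul_of_nonneg_left _ (hτ0 s a s')
            rw [← Real.dist_eq]
            exact dist_le_pi_dist v w s'
        _ = dist v w := by rw [← Finset.sum_mul, hτ1 s a, one_mul]
  set vb : S → ℝ := ContractingWith.fixedPoint T hcon with hvb
  have hfix : T vb = vb := hcon.fixedPoint_isFixedPt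
  refine ⟨vb, fun s => μf s (zf vb s), fun s => tf s (zf vb s),
    fun s => hμlb s (zf vb s), fun s => hμub s (zf vb s), fun s => hμsum s (zf vb s),
    fun s => hgt s (zf vb s), fun s => hlt s (zf vb s), ?_⟩
  intro s
  conv_lhs => rw [← hfix]

/-- Existence of a nonnegative discounted occupancy measure for a Markov kernel. -/
lemma adb_exists_occupancy {S : Type*} [Fintype S] [Nonempty S]
    (P : S → S → ℝ) (ι : S → ℝ) (γ : ℝ)
    (hP0 : ∀ s' s, 0 ≤ P s' s) (hP1 : ∀ s', ∑ s, P s' s = 1)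
    (hι0 : ∀ s, 0 ≤ ι s) (hι1 : ∑ s, ι s = 1)
    (hγ0 : 0 ≤ γ) (hγ1 : γ < 1) :
    ∃ d : S → ℝ, (∀ s, 0 ≤ d s) ∧
      ∀ s, d s = (1 - γ) * ι s + γ * ∑ s', d s' * P s' s := by
  classical
  set step : (S → ℝ) → S → ℝ := fun f s => ∑ s', f s' * P s' s with hstep
  set it : ℕ → S → ℝ := fun n => step^[n] ι with hit
  have hit0 : it 0 = ι := by simp [hit]
  have hitsucc : ∀ n, it (n + 1) = step (it n) := by
    intro n
    rw [hit]
    simp only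
    rw [Function.iterate_succ_apply']
  have hitnn : ∀ n s, 0 ≤ it n s := by
    intro n
    induction n with
    | zero => intro s; rw [hit0]; exact hι0 s
    | succ n ih =>
      intro s
      rw [hitsucc n]
      exact Finset.sum_nonneg fun s' _ => mul_nonneg (ih s') (hP0 s' s)
  have hitsum : ∀ n, ∑ s, it n s = 1 := by
    intro n
    induction n with
    | zero => rw [hit0]; exact hι1
    | succ n ih =>
      rw [hitsucc n]
      show ∑ s, ∑ s', it n s' * P s' s = 1
      rw [Finset.sum_comm]
      calc ∑ s', ∑ s, it n s' * P s' s = ∑ s', it n s' * ∑ s, P s' s := by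
            exact Finset.sum_congr rfl fun s' _ => by rw [Finset.mul_sum]
        _ = 1 := by
            rw [Finset.sum_congr rfl fun s' (_ : s' ∈ univ) => by rw [hP1 s', mul_one]]
            exact ih
  have hitle : ∀ n s, it n s ≤ 1 := by
    intro n s
    calc it n s ≤ ∑ s', it n s' :=
          Finset.single_le_sum (fun s' _ => hitnn n s') (Finset.mem_univ s)
      _ = 1 := hitsum n
  have hsumm : ∀ s, Summable (fun n => γ ^ n * it n s) := by
    intro s
    apply Summable.of_nonneg_of_le
      (fun n => mul_nonneg (pow_nonneg hγ0 n) (hitnn n s))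
      (fun n => by
        calc γ ^ n * it n s ≤ γ ^ n * 1 :=
              mul_le_mul_of_nonneg_left (hitle n s) (pow_nonneg hγ0 n)
          _ = γ ^ n := mul_one _)
      (summable_geometric_of_lt_one hγ0 hγ1)
  refine ⟨fun s => (1 - γ) * ∑' n, γ ^ n * it n s, ?_, ?_⟩
  · intro s
    apply mul_nonneg (by linarith)
    exact tsum_nonneg fun n => mul_nonneg (pow_nonneg hγ0 n) (hitnn n s)
  · intro s
    have hswap : ∑ s', ((1 - γ) * ∑' n, γ ^ n * it n s') * P s' s
        = (1 - γ) * ∑' n, γ ^ n * it (n + 1) s := by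
      have e1 : ∀ s', ((1 - γ) * ∑' n, γ ^ n * it n s') * P s' s
          = (1 - γ) * ∑' n, (γ ^ n * it n s') * P s' s := by
        intro s'
        rw [mul_assoc, ← tsum_mul_right]
      rw [Finset.sum_congr rfl fun s' _ => e1 s', ← Finset.mul_sum]
      congr 1
      rw [← Summable.tsum_finsetSum (fun s' _ => (hsumm s').mul_right (P s' s))]
      congr 1
      funext n
      rw [hitsucc n]
      show ∑ s', γ ^ n * it n s' * P s' s = γ ^ n * ∑ s', it n s' * P s' s
      rw [Finset.mul_sum]
      exact Finset.sum_congr rfl fun s' _ => by ring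
    rw [hswap]
    have hshift : ∑' n, γ ^ n * it n s
        = γ ^ 0 * it 0 s + ∑' n, γ ^ (n + 1) * it (n + 1) s := by
      exact (Summable.tsum_eq_zero_add (hsumm s))
    have e2 : γ * ((1 - γ) * ∑' n, γ ^ n * it (n + 1) s)
        = (1 - γ) * ∑' n, γ ^ (n + 1) * it (n + 1) s := by
      rw [← tsum_mul_left, ← tsum_mul_left, ← tsum_mul_left]
      congr 1
      funext n
      ring
    rw [e2]
    have := hshift
    rw [hit0] at this
    simp only [pow_zero, one_mul] at this
    calc (1 - γ) * ∑' n, γ ^ n * it n s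
        = (1 - γ) * (ι s + ∑' n, γ ^ (n + 1) * it (n + 1) s) := by rw [this]
      _ = (1 - γ) * ι s + (1 - γ) * ∑' n, γ ^ (n + 1) * it (n + 1) s := by ring

/-- given optimal solutions of the (feasible) action-density-bounded dual
and primal LPs, the derived policy `π* = p*/d*` is greedy with respect to the optimal
adjusted value function `q*`. -/
theorem adb_policy_greedy
    {S A : Type*} [Fintype S] [Fintype A] [Nonempty S] [Nonempty A]
    (ι : S → ℝ) (τ : S → A → S → ℝ) (γ : ℝ) (r : S → A → S → ℝ)
    (hMDP : IsMDP ι τ γ)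
    (πlb πub : S → A → ℝ) (hlb0 : ∀ s a, 0 ≤ πlb s a)
    (hlb1 : ∀ s, ∑ a, πlb s a ≤ 1) (hub1 : ∀ s, 1 ≤ ∑ a, πub s a)
    (dStar : S → ℝ) (pStar : S → A → ℝ)
    (hDFeas : DualFeas ι τ γ dStar pStar ∧
      ∀ s a, dStar s * πlb s a ≤ pStar s a ∧ pStar s a ≤ dStar s * πub s a)
    (hDOpt : ∀ (d : S → ℝ) (p : S → A → ℝ),
      (DualFeas ι τ γ d p ∧
        ∀ s a, d s * πlb s a ≤ p s a ∧ p s a ≤ d s * πub s a) →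
      DualObj τ r p ≤ DualObj τ r pStar)
    (vStar : S → ℝ) (qStar rlbStar rubStar : S → A → ℝ)
    (hPFeas : (∀ s a, qStar s a ≤ vStar s) ∧
      (∀ s a, qStar s a = ∑ s', τ s a s' *
        (r s a s' + rlbStar s a - (∑ b, rlbStar s b * πlb s b) -
          rubStar s a + (∑ b, rubStar s b * πub s b) + γ * vStar s')) ∧
      (∀ s a, 0 ≤ rlbStar s a) ∧ ∀ s a, 0 ≤ rubStar s a)
    (hPOpt : ∀ (v : S → ℝ) (q rlb rub : S → A → ℝ),
      ((∀ s a, q s a ≤ v s) ∧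
        (∀ s a, q s a = ∑ s', τ s a s' *
          (r s a s' + rlb s a - (∑ b, rlb s b * πlb s b) -
            rub s a + (∑ b, rub s b * πub s b) + γ * v s')) ∧
        (∀ s a, 0 ≤ rlb s a) ∧ ∀ s a, 0 ≤ rub s a) →
      ∑ s, ι s * ((1 - γ) * vStar s) ≤ ∑ s, ι s * ((1 - γ) * v s)) :
    ∀ s a, 0 < pStar s a / dStar s → ∀ a', qStar s a' ≤ qStar s a := by
  classical
  obtain ⟨hι0, hι1, hτ0, hτ1, hγ0, hγ1⟩ := hMDP
  obtain ⟨⟨hpsum, hpvis, hpnn⟩, hpbd⟩ := hDFeas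
  obtain ⟨hqv, hqdef, hrlb0, hrub0⟩ := hPFeas
  -- positivity of dStar
  have hd0 : ∀ s, 0 < dStar s := by
    intro s
    rw [hpvis s]
    have h2 : 0 ≤ ∑ s', ∑ a', pStar s' a' * τ s' a' s :=
      Finset.sum_nonneg fun s' _ => Finset.sum_nonneg fun a' _ =>
        mul_nonneg (hpnn s' a') (hτ0 s' a' s)
    nlinarith [hι0 s]
  -- πlb ≤ πub
  have hle : ∀ s a, πlb s a ≤ πub s a := by
    intro s a
    have h := (hpbd s a).1.trans (hpbd s a).2
    exact le_of_mul_le_mul_left h (hd0 s)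
  -- the q-expansion helper
  have hqexp : ∀ (s : S) (a : A) (c1 c2 c3 c4 : ℝ) (v : S → ℝ),
      ∑ s', τ s a s' * (r s a s' + c1 - c2 - c3 + c4 + γ * v s')
        = (∑ s', τ s a s' * r s a s') + (c1 - c2 - c3 + c4)
          + γ * ∑ s', τ s a s' * v s' := by
    intro s a c1 c2 c3 c4 v
    calc ∑ s', τ s a s' * (r s a s' + c1 - c2 - c3 + c4 + γ * v s')
        = ∑ s', (τ s a s' * r s a s' + τ s a s' * (c1 - c2 - c3 + c4)
            + γ * (τ s a s' * v s')) := Finset.sum_congr rfl fun s' _ => by ring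
      _ = (∑ s', τ s a s' * r s a s') + (∑ s', τ s a s' * (c1 - c2 - c3 + c4))
            + ∑ s', γ * (τ s a s' * v s') := by
          rw [Finset.sum_add_distrib, Finset.sum_add_distrib]
      _ = (∑ s', τ s a s' * r s a s') + (c1 - c2 - c3 + c4)
            + γ * ∑ s', τ s a s' * v s' := by
          rw [← Finset.sum_mul, hτ1 s a, one_mul, ← Finset.mul_sum]
  -- fixed point of the adjusted Bellman operator with greedy policy
  obtain ⟨vb, πb, tb, hπlb, hπub, hπsum, hπgt, hπlt, hvfix⟩ :=
    adb_exists_fixed τ γ r πlb πub hτ0 hτ1 hγ0 hγ1 hlb0 hle hlb1 hub1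
  set zb : S → A → ℝ :=
    fun s a => (∑ s', τ s a s' * r s a s') + γ * ∑ s', τ s a s' * vb s' with hzb
  set rlb : S → A → ℝ := fun s a => max (tb s - zb s a) 0 with hrlb
  set rub : S → A → ℝ := fun s a => max (zb s a - tb s) 0 with hrub
  set qb : S → A → ℝ := fun s a => ∑ s', τ s a s' *
      (r s a s' + rlb s a - (∑ b, rlb s b * πlb s b) -
        rub s a + (∑ b, rub s b * πub s b) + γ * vb s') with hqb
  -- vb s = tb s + ∑ rub*πub − ∑ rlb*πlb, and qb = vb
  have hterm : ∀ s a, πb s a * (zb s a - tb s)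
      = rub s a * πub s a - rlb s a * πlb s a := by
    intro s a
    rcases lt_trichotomy (zb s a) (tb s) with h | h | h
    · rw [hπlt s a h, hrub, hrlb]
      simp only
      rw [max_eq_right (by linarith), max_eq_left (by linarith)]
      ring
    · rw [hrub, hrlb]
      simp only
      rw [h]
      simp
    · rw [hπgt s a h, hrub, hrlb]
      simp only
      rw [max_eq_left (by linarith), max_eq_right (by linarith)]
      ring
  have hvb_eq : ∀ s, vb s = tb s + (∑ b, rub s b * πub s b)
      - (∑ b, rlb s b * πlb s b) := by
    intro s
    have h1 : vb s - tb s = ∑ a, πb s a * (zb s a - tb s) := by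
      rw [Finset.sum_congr rfl (fun a (_ : a ∈ univ) => by ring :
          ∀ a ∈ univ, πb s a * (zb s a - tb s) = πb s a * zb s a - πb s a * tb s),
        Finset.sum_sub_distrib, ← Finset.sum_mul, hπsum s, one_mul, ← hvfix s]
    have h2 : ∑ a, πb s a * (zb s a - tb s)
        = (∑ b, rub s b * πub s b) - (∑ b, rlb s b * πlb s b) := by
      rw [Finset.sum_congr rfl fun a _ => hterm s a, Finset.sum_sub_distrib]
    linarith [h1.trans h2]
  have hqb_eq : ∀ s a, qb s a = vb s := by
    intro s a
    rw [hqb]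
    simp only
    rw [hqexp s a (rlb s a) (∑ b, rlb s b * πlb s b) (rub s a)
      (∑ b, rub s b * πub s b) vb]
    have hdiff : rlb s a - rub s a = tb s - zb s a := by
      rw [hrlb, hrub]
      simp only
      rcases le_total (zb s a) (tb s) with h | h
      · rw [max_eq_left (by linarith), max_eq_right (by linarith)]; ring
      · rw [max_eq_right (by linarith), max_eq_left (by linarith)]; ring
    have := hvb_eq s
    rw [hzb] at *
    simp only at *
    linarith
  -- primal optimality gives A1
  have A1 : ∑ s, ι s * ((1 - γ) * vStar s) ≤ ∑ s, ι s * ((1 - γ) * vb s) := by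
    apply hPOpt vb qb rlb rub
    refine ⟨fun s a => le_of_eq (hqb_eq s a), fun s a => rfl, ?_, ?_⟩
    · intro s a; exact le_max_right _ _
    · intro s a; exact le_max_right _ _
  -- occupancy measure of the greedy policy
  set P : S → S → ℝ := fun s' s => ∑ a, πb s' a * τ s' a s with hP
  have hP0 : ∀ s' s, 0 ≤ P s' s := fun s' s =>
    Finset.sum_nonneg fun a _ => mul_nonneg (le_trans (hlb0 s' a) (hπlb s' a)) (hτ0 s' a s)
  have hP1 : ∀ s', ∑ s, P s' s = 1 := by
    intro s'
    rw [hP]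
    simp only
    rw [Finset.sum_comm]
    calc ∑ a, ∑ s, πb s' a * τ s' a s = ∑ a, πb s' a * ∑ s, τ s' a s := by
          exact Finset.sum_congr rfl fun a _ => by rw [Finset.mul_sum]
      _ = 1 := by
          rw [Finset.sum_congr rfl fun a (_ : a ∈ univ) => by rw [hτ1 s' a, mul_one]]
          exact hπsum s'
  obtain ⟨db, hdb0, hdbfix⟩ := adb_exists_occupancy P ι γ hP0 hP1
    (fun s => le_of_lt (hι0 s)) hι1 hγ0 hγ1
  set pb : S → A → ℝ := fun s a => db s * πb s a with hpb
  have hpbsum : ∀ s, ∑ a, pb s a = db s := by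
    intro s
    rw [hpb]
    simp only
    rw [← Finset.mul_sum, hπsum s, mul_one]
  have hdbP : ∀ s s', ∑ a', pb s' a' * τ s' a' s = db s' * P s' s := by
    intro s s'
    rw [hpb, hP]
    simp only
    rw [Finset.mul_sum]
    exact Finset.sum_congr rfl fun a' _ => by ring
  have hpbvis : ∀ s, db s = (1 - γ) * ι s + γ * ∑ s', ∑ a', pb s' a' * τ s' a' s := by
    intro s
    rw [Finset.sum_congr rfl fun s' (_ : s' ∈ univ) => hdbP s s']
    exact hdbfix s
  have hpbfeas : DualFeas ι τ γ db pb ∧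
      ∀ s a, db s * πlb s a ≤ pb s a ∧ pb s a ≤ db s * πub s a := by
    refine ⟨⟨hpbsum, hpbvis, ?_⟩, ?_⟩
    · intro s a
      exact mul_nonneg (hdb0 s) (le_trans (hlb0 s a) (hπlb s a))
    · intro s a
      exact ⟨mul_le_mul_of_nonneg_left (hπlb s a) (hdb0 s),
        mul_le_mul_of_nonneg_left (hπub s a) (hdb0 s)⟩
  have A2pre : DualObj τ r pb ≤ DualObj τ r pStar := hDOpt db pb hpbfeas
  -- DualObj pb = ∑ ι ((1-γ) vb)
  have hDov : DualObj τ r pb = ∑ s, ι s * ((1 - γ) * vb s) := by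
    have hterm2 : ∀ s a, db s * (πb s a * zb s a)
        = pb s a * (∑ s', τ s a s' * r s a s')
          + γ * ∑ s', pb s a * τ s a s' * vb s' := by
      intro s a
      have hW : ∑ s', pb s a * τ s a s' * vb s' = pb s a * ∑ s', τ s a s' * vb s' := by
        rw [Finset.mul_sum]
        exact Finset.sum_congr rfl fun s' _ => by ring
      rw [hW, hzb, hpb]
      simp only
      ring
    have hsecond : ∑ s, ∑ a, γ * ∑ s', pb s a * τ s a s' * vb s'
        = ∑ s', (db s' - (1 - γ) * ι s') * vb s' := by
      have h1 : ∀ s', γ * (∑ s, ∑ a, pb s a * τ s a s') = db s' - (1 - γ) * ι s' := by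
        intro s'
        have h := hpbvis s'
        linarith
      calc ∑ s, ∑ a, γ * ∑ s', pb s a * τ s a s' * vb s'
          = ∑ s, ∑ a, ∑ s', γ * (pb s a * τ s a s' * vb s') :=
            Finset.sum_congr rfl fun s _ => Finset.sum_congr rfl fun a _ => by
              rw [Finset.mul_sum]
        _ = ∑ s, ∑ s', ∑ a, γ * (pb s a * τ s a s' * vb s') :=
            Finset.sum_congr rfl fun s _ => Finset.sum_comm
        _ = ∑ s', ∑ s, ∑ a, γ * (pb s a * τ s a s' * vb s') := Finset.sum_comm
        _ = ∑ s', (γ * (∑ s, ∑ a, pb s a * τ s a s')) * vb s' := by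
            refine Finset.sum_congr rfl fun s' _ => ?_
            simp only [Finset.sum_mul, Finset.mul_sum]
            exact Finset.sum_congr rfl fun s _ =>
              Finset.sum_congr rfl fun a _ => by ring
        _ = ∑ s', (db s' - (1 - γ) * ι s') * vb s' :=
            Finset.sum_congr rfl fun s' _ => by rw [h1 s']
    have key : ∑ s, db s * vb s
        = DualObj τ r pb + ∑ s', (db s' - (1 - γ) * ι s') * vb s' := by
      calc ∑ s, db s * vb s
          = ∑ s, ∑ a, (pb s a * (∑ s', τ s a s' * r s a s')
              + γ * ∑ s', pb s a * τ s a s' * vb s') := by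
            refine Finset.sum_congr rfl fun s _ => ?_
            have hvfix' : vb s = ∑ a, πb s a * zb s a := hvfix s
            rw [hvfix', Finset.mul_sum]
            exact Finset.sum_congr rfl fun a _ => hterm2 s a
        _ = (∑ s, ∑ a, pb s a * (∑ s', τ s a s' * r s a s'))
              + ∑ s, ∑ a, γ * ∑ s', pb s a * τ s a s' * vb s' := by
            rw [← Finset.sum_add_distrib]
            exact Finset.sum_congr rfl fun s _ => Finset.sum_add_distrib
        _ = DualObj τ r pb + ∑ s', (db s' - (1 - γ) * ι s') * vb s' := by
            rw [hsecond]; rfl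
    have h2 : ∑ s, ι s * ((1 - γ) * vb s) = ∑ s, (1 - γ) * ι s * vb s :=
      Finset.sum_congr rfl fun s _ => by ring
    have h3 : ∑ s', (db s' - (1 - γ) * ι s') * vb s'
        = ∑ s', db s' * vb s' - ∑ s', (1 - γ) * ι s' * vb s' := by
      rw [← Finset.sum_sub_distrib]
      exact Finset.sum_congr rfl fun s' _ => by ring
    rw [h2]
    rw [h3] at key
    linarith
  have A2 : ∑ s, ι s * ((1 - γ) * vb s) ≤ DualObj τ r pStar := hDov ▸ A2pre
  have SD : ∑ s, ι s * ((1 - γ) * vStar s) ≤ DualObj τ r pStar := A1.trans A2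
  -- weak duality identity for the starred solutions
  set X : S → A → ℝ := fun s a => rlbStar s a - (∑ b, rlbStar s b * πlb s b)
      - rubStar s a + (∑ b, rubStar s b * πub s b) with hX
  have hq' : ∀ s a, qStar s a = (∑ s', τ s a s' * r s a s') + X s a
      + γ * ∑ s', τ s a s' * vStar s' :=
    fun s a => (hqdef s a).trans (hqexp s a _ _ _ _ vStar)
  have hA : ∑ s, ∑ a, pStar s a * qStar s a
      = DualObj τ r pStar + (∑ s, ∑ a, pStar s a * X s a)
        + ∑ s, ∑ a, γ * ∑ s', pStar s a * τ s a s' * vStar s' := by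
    calc ∑ s, ∑ a, pStar s a * qStar s a
        = ∑ s, ∑ a, (pStar s a * (∑ s', τ s a s' * r s a s') + pStar s a * X s a
            + γ * ∑ s', pStar s a * τ s a s' * vStar s') := by
          refine Finset.sum_congr rfl fun s _ => Finset.sum_congr rfl fun a _ => ?_
          rw [hq' s a]
          have hW : ∑ s', pStar s a * τ s a s' * vStar s'
              = pStar s a * ∑ s', τ s a s' * vStar s' := by
            rw [Finset.mul_sum]
            exact Finset.sum_congr rfl fun s' _ => by ring
          rw [hW]; ring
      _ = (∑ s, ∑ a, pStar s a * (∑ s', τ s a s' * r s a s'))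
            + (∑ s, ∑ a, pStar s a * X s a)
            + ∑ s, ∑ a, γ * ∑ s', pStar s a * τ s a s' * vStar s' := by
          rw [← Finset.sum_add_distrib, ← Finset.sum_add_distrib]
          refine Finset.sum_congr rfl fun s _ => ?_
          rw [← Finset.sum_add_distrib, ← Finset.sum_add_distrib]
      _ = DualObj τ r pStar + (∑ s, ∑ a, pStar s a * X s a)
            + ∑ s, ∑ a, γ * ∑ s', pStar s a * τ s a s' * vStar s' := rfl
  have hthird : ∑ s, ∑ a, γ * ∑ s', pStar s a * τ s a s' * vStar s'
      = ∑ s', (dStar s' - (1 - γ) * ι s') * vStar s' := by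
    have h1 : ∀ s', γ * (∑ s, ∑ a, pStar s a * τ s a s')
        = dStar s' - (1 - γ) * ι s' := by
      intro s'
      have h := hpvis s'
      linarith
    calc ∑ s, ∑ a, γ * ∑ s', pStar s a * τ s a s' * vStar s'
        = ∑ s, ∑ a, ∑ s', γ * (pStar s a * τ s a s' * vStar s') :=
          Finset.sum_congr rfl fun s _ => Finset.sum_congr rfl fun a _ => by
            rw [Finset.mul_sum]
      _ = ∑ s, ∑ s', ∑ a, γ * (pStar s a * τ s a s' * vStar s') :=
          Finset.sum_congr rfl fun s _ => Finset.sum_comm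
      _ = ∑ s', ∑ s, ∑ a, γ * (pStar s a * τ s a s' * vStar s') := Finset.sum_comm
      _ = ∑ s', (γ * (∑ s, ∑ a, pStar s a * τ s a s')) * vStar s' := by
          refine Finset.sum_congr rfl fun s' _ => ?_
          simp only [Finset.sum_mul, Finset.mul_sum]
          exact Finset.sum_congr rfl fun s _ =>
            Finset.sum_congr rfl fun a _ => by ring
      _ = ∑ s', (dStar s' - (1 - γ) * ι s') * vStar s' :=
          Finset.sum_congr rfl fun s' _ => by rw [h1 s']
  have hB : ∀ s, ∑ a, pStar s a * X s a
      = (∑ a, rlbStar s a * (pStar s a - dStar s * πlb s a))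
        + ∑ a, rubStar s a * (dStar s * πub s a - pStar s a) := by
    intro s
    have e1 : ∑ a, pStar s a * X s a
        = (∑ a, pStar s a * rlbStar s a) - dStar s * (∑ b, rlbStar s b * πlb s b)
          - (∑ a, pStar s a * rubStar s a)
          + dStar s * (∑ b, rubStar s b * πub s b) := by
      calc ∑ a, pStar s a * X s a
          = ∑ a, (pStar s a * rlbStar s a
              - pStar s a * (∑ b, rlbStar s b * πlb s b)
              - pStar s a * rubStar s a
              + pStar s a * (∑ b, rubStar s b * πub s b)) :=
            Finset.sum_congr rfl fun a _ => by rw [hX]; ring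
        _ = (∑ a, pStar s a * rlbStar s a)
              - (∑ a, pStar s a) * (∑ b, rlbStar s b * πlb s b)
              - (∑ a, pStar s a * rubStar s a)
              + (∑ a, pStar s a) * (∑ b, rubStar s b * πub s b) := by
            rw [Finset.sum_add_distrib, Finset.sum_sub_distrib, Finset.sum_sub_distrib,
              ← Finset.sum_mul, ← Finset.sum_mul]
        _ = _ := by rw [hpsum s]
    have e2 : ∑ a, rlbStar s a * (pStar s a - dStar s * πlb s a)
        = (∑ a, pStar s a * rlbStar s a)
          - dStar s * (∑ b, rlbStar s b * πlb s b) := by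
      calc ∑ a, rlbStar s a * (pStar s a - dStar s * πlb s a)
          = ∑ a, (pStar s a * rlbStar s a - dStar s * (rlbStar s a * πlb s a)) :=
            Finset.sum_congr rfl fun a _ => by ring
        _ = _ := by rw [Finset.sum_sub_distrib, ← Finset.mul_sum]
    have e3 : ∑ a, rubStar s a * (dStar s * πub s a - pStar s a)
        = dStar s * (∑ b, rubStar s b * πub s b)
          - (∑ a, pStar s a * rubStar s a) := by
      calc ∑ a, rubStar s a * (dStar s * πub s a - pStar s a)
          = ∑ a, (dStar s * (rubStar s a * πub s a) - pStar s a * rubStar s a) :=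
            Finset.sum_congr rfl fun a _ => by ring
        _ = _ := by rw [Finset.sum_sub_distrib, ← Finset.mul_sum]
    linarith
  have hBsum : ∑ s, ∑ a, pStar s a * X s a
      = (∑ s, ∑ a, rlbStar s a * (pStar s a - dStar s * πlb s a))
        + ∑ s, ∑ a, rubStar s a * (dStar s * πub s a - pStar s a) := by
    rw [← Finset.sum_add_distrib]
    exact Finset.sum_congr rfl fun s _ => hB s
  have hD : ∑ s, ∑ a, pStar s a * (vStar s - qStar s a)
      = ∑ s, dStar s * vStar s - ∑ s, ∑ a, pStar s a * qStar s a := by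
    rw [← Finset.sum_sub_distrib]
    refine Finset.sum_congr rfl fun s _ => ?_
    calc ∑ a, pStar s a * (vStar s - qStar s a)
        = ∑ a, (pStar s a * vStar s - pStar s a * qStar s a) :=
          Finset.sum_congr rfl fun a _ => by ring
      _ = (∑ a, pStar s a) * vStar s - ∑ a, pStar s a * qStar s a := by
          rw [Finset.sum_sub_distrib, ← Finset.sum_mul]
      _ = dStar s * vStar s - ∑ a, pStar s a * qStar s a := by rw [hpsum s]
  have hι : ∑ s, ι s * ((1 - γ) * vStar s) = ∑ s, (1 - γ) * ι s * vStar s :=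
    Finset.sum_congr rfl fun s _ => by ring
  have hsplit3 : ∑ s', (dStar s' - (1 - γ) * ι s') * vStar s'
      = ∑ s', dStar s' * vStar s' - ∑ s', (1 - γ) * ι s' * vStar s' := by
    rw [← Finset.sum_sub_distrib]
    exact Finset.sum_congr rfl fun s' _ => by ring
  -- the three slack sums are nonnegative and their total is ≤ 0
  have hS1nn : ∀ s, (0:ℝ) ≤ ∑ a, pStar s a * (vStar s - qStar s a) := fun s =>
    Finset.sum_nonneg fun a _ => mul_nonneg (hpnn s a) (by linarith [hqv s a])
  have hS2nn : (0:ℝ) ≤ ∑ s, ∑ a, rlbStar s a * (pStar s a - dStar s * πlb s a) :=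
    Finset.sum_nonneg fun s _ => Finset.sum_nonneg fun a _ =>
      mul_nonneg (hrlb0 s a) (by linarith [(hpbd s a).1])
  have hS3nn : (0:ℝ) ≤ ∑ s, ∑ a, rubStar s a * (dStar s * πub s a - pStar s a) :=
    Finset.sum_nonneg fun s _ => Finset.sum_nonneg fun a _ =>
      mul_nonneg (hrub0 s a) (by linarith [(hpbd s a).2])
  have hS1zero : ∑ s, ∑ a, pStar s a * (vStar s - qStar s a) = 0 := by
    have hch : ∑ s, ∑ a, pStar s a * (vStar s - qStar s a)
        + (∑ s, ∑ a, rlbStar s a * (pStar s a - dStar s * πlb s a))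
        + (∑ s, ∑ a, rubStar s a * (dStar s * πub s a - pStar s a))
        = ∑ s, ι s * ((1 - γ) * vStar s) - DualObj τ r pStar := by
      rw [hD, hA, hBsum, hthird, hsplit3, hι]
      ring
    have hle0 : ∑ s, ∑ a, pStar s a * (vStar s - qStar s a) ≤ 0 := by linarith
    exact le_antisymm hle0 (Finset.sum_nonneg fun s _ => hS1nn s)
  have hterm0 : ∀ s a, pStar s a * (vStar s - qStar s a) = 0 := by
    have h1 := (Finset.sum_eq_zero_iff_of_nonneg fun s _ => hS1nn s).mp hS1zero
    intro s a
    have h2 := (Finset.sum_eq_zero_iff_of_nonneg fun a (_ : a ∈ univ) =>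
      mul_nonneg (hpnn s a) (by linarith [hqv s a])).mp (h1 s (Finset.mem_univ s))
    exact h2 a (Finset.mem_univ a)
  -- conclusion
  intro s a hpos a'
  have hps : 0 < pStar s a := by
    by_contra h
    push_neg at h
    have hz : pStar s a = 0 := le_antisymm h (hpnn s a)
    rw [hz, zero_div] at hpos
    exact lt_irrefl 0 hpos
  have hvq : vStar s - qStar s a = 0 := by
    rcases mul_eq_zero.mp (hterm0 s a) with h | h
    · exact absurd h (ne_of_gt hps)
    · exact h
  calc qStar s a' ≤ vStar s := hqv s a'
    _ = qStar s a := by linarith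
end

section
/- Assume the action-density-bounded dual LP is feasible. Let (d*, p*) be an optimal solution of the action-density-bounded dual LP with derived policy π*(a|s) = p*(s,a)/d*(s), and let (v*, q*, r_lb*, r_ub*) be an optimal solution of the action-density-bounded primal LP. Then r_lb*(s,a) = 0 for every (s,a) with π_lb(a|s) < π*(a|s), and r_ub*(s,a) = 0 for every (s,a) with π*(a|s) < π_ub(a|s); that is, the optimal modified reward is only altered at tight action density bounds. -/
open Finset

/-!
Write `π* = p*/d*`, let `v` be its value function and `q` the corresponding action values.
Dual optimality makes `π*` greedy for `q` inside the box `[π_lb, π_ub]`: moving mass `ε` at a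
state `s` from an action `a` above its lower bound to an action `b` below its upper bound
changes the dual objective by `d'(s) ε (q(s,b) - q(s,a))`, where `d' > 0` is the visitation
density of the new policy. Hence every state has a cutoff `t(s)` with `π*` at its lower bound
where `q < t` and at its upper bound where `q > t`, and the modifications `max (t - q) 0`,
`max (q - t) 0` make `(v, v, r_lb, r_ub)` primal feasible with objective equal to the dual
optimum. Pairing the constraints, the gap between a primal and a dual feasible point is the sum
of the nonnegative terms `r_lb (p - d π_lb) + r_ub (d π_ub - p) + p (v - q)`; at the two optima
it is `≤ 0`, so every term vanishes.
-/

open Finset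

section

variable {S A : Type*}

theorem abs_sum_mul_le_of_stochastic {α : Type*} [Fintype α] {w x : α → ℝ} {M : ℝ}
    (hw0 : ∀ i, 0 ≤ w i) (hw1 : ∑ i, w i = 1) (hx : ∀ i, |x i| ≤ M) :
    |∑ i, w i * x i| ≤ M :=
  calc |∑ i, w i * x i| ≤ ∑ i, w i * |x i| := by
        refine (abs_sum_le_sum_abs _ _).trans_eq (sum_congr rfl fun i _ => ?_)
        rw [abs_mul, abs_of_nonneg (hw0 i)]
    _ ≤ ∑ i, w i * M := sum_le_sum fun i _ => mul_le_mul_of_nonneg_left (hx i) (hw0 i)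
    _ = M := by rw [← sum_mul, hw1, one_mul]

section MoveMass

variable [DecidableEq A]

def moveMass (x : A → ℝ) (a b : A) (ε : ℝ) : A → ℝ :=
  x - Pi.single a ε + Pi.single b ε

theorem moveMass_mem_Icc {lb ub x : A → ℝ} {a b : A} {ε : ℝ}
    (hx : ∀ c, x c ∈ Set.Icc (lb c) (ub c)) (hab : a ≠ b) (hε : 0 ≤ ε) (hεa : ε ≤ x a - lb a)
    (hεb : ε ≤ ub b - x b) (c : A) :
    moveMass x a b ε c ∈ Set.Icc (lb c) (ub c) := by
  obtain ⟨hl, hu⟩ := hx c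
  simp only [moveMass, Pi.add_apply, Pi.sub_apply, Pi.single_apply, Set.mem_Icc]
  split_ifs with hca hcb hcb'
  · exact absurd (hca.symm.trans hcb) hab
  · subst hca
    constructor <;> linarith
  · subst hcb'
    constructor <;> linarith
  · constructor <;> linarith

variable [Fintype A]

theorem sum_moveMass_mul (x : A → ℝ) (a b : A) (ε : ℝ) (f : A → ℝ) :
    ∑ c, moveMass x a b ε c * f c = ∑ c, x c * f c + ε * (f b - f a) := by
  simp only [moveMass, Pi.add_apply, Pi.sub_apply, add_mul, sub_mul, sum_add_distrib,
    sum_sub_distrib, Pi.single_apply, ite_mul, zero_mul, sum_ite_eq', mem_univ, if_true]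
  ring

theorem sum_moveMass (x : A → ℝ) (a b : A) (ε : ℝ) : ∑ c, moveMass x a b ε c = ∑ c, x c := by
  simpa using sum_moveMass_mul x a b ε 1

end MoveMass

section Actions

variable [Fintype A]

theorem exists_threshold {lb ub x q : A → ℝ} (hlb : ∀ a, lb a ≤ x a) (hub : ∀ a, x a ≤ ub a)
    (hq : ∀ a b, lb a < x a → x b < ub b → q b ≤ q a) :
    ∃ t, (∀ a, q a < t → x a = lb a) ∧ ∀ a, t < q a → x a = ub a := by
  by_cases hfree : ∃ a, lb a < x a
  · -- the threshold is the least value of `q` among actions strictly above their lower bound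
    obtain ⟨a₀, ha₀, hmin⟩ := (univ.filter fun a => lb a < x a).exists_min_image q
      (by simpa [Finset.filter_nonempty_iff] using hfree)
    rw [mem_filter] at ha₀
    refine ⟨q a₀, fun a ha => ?_, fun a ha => ?_⟩
    · by_contra hne
      exact (hmin a (by simpa using lt_of_le_of_ne (hlb a) (Ne.symm hne))).not_gt ha
    · by_contra hne
      exact (hq a₀ a ha₀.2 (lt_of_le_of_ne (hub a) hne)).not_gt ha
  · push Not at hfree
    obtain ⟨t, ht⟩ := Finite.exists_le q
    exact ⟨t, fun a _ => le_antisymm (hfree a) (hlb a), fun a ha => absurd (ht a) ha.not_ge⟩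

def rewardModification (lb ub rl ru : A → ℝ) (a : A) : ℝ :=
  rl a - ∑ b, rl b * lb b - ru a + ∑ b, ru b * ub b

theorem sum_mul_rewardModification (lb ub rl ru p : A → ℝ) :
    ∑ a, p a * rewardModification lb ub rl ru a
      = ∑ a, (rl a * (p a - (∑ b, p b) * lb a) + ru a * ((∑ b, p b) * ub a - p a)) := by
  have hl : ∑ a, rl a * ((∑ b, p b) * lb a) = (∑ b, p b) * ∑ a, rl a * lb a := by
    rw [mul_sum]; exact sum_congr rfl fun _ _ => by ring
  have hu : ∑ a, ru a * ((∑ b, p b) * ub a) = (∑ b, p b) * ∑ a, ru a * ub a := by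
    rw [mul_sum]; exact sum_congr rfl fun _ _ => by ring
  have hp : ∀ a, p a * rewardModification lb ub rl ru a = rl a * p a
      - (∑ b, rl b * lb b) * p a - ru a * p a + (∑ b, ru b * ub b) * p a := fun a => by
    rw [rewardModification]; ring
  simp only [hp, mul_sub, sum_add_distrib, sum_sub_distrib, hl, hu, ← mul_sum]
  ring

theorem add_rewardModification_eq {lb ub x q : A → ℝ} {t : ℝ} (hx : ∑ a, x a = 1)
    (hlow : ∀ a, q a < t → x a = lb a) (hhigh : ∀ a, t < q a → x a = ub a) (a : A) :
    q a + rewardModification lb ub (fun b => max (t - q b) 0) (fun b => max (q b - t) 0) a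
      = ∑ b, x b * q b := by
  have hl : ∀ b, max (t - q b) 0 * lb b = max (t - q b) 0 * x b := fun b => by
    rcases lt_or_ge (q b) t with h | h
    · rw [hlow b h]
    · rw [max_eq_right (by linarith), zero_mul, zero_mul]
  have hu : ∀ b, max (q b - t) 0 * ub b = max (q b - t) 0 * x b := fun b => by
    rcases lt_or_ge t (q b) with h | h
    · rw [hhigh b h]
    · rw [max_eq_right (by linarith), zero_mul, zero_mul]
  have hsplit : ∀ b, max (q b - t) 0 - max (t - q b) 0 = q b - t := fun b => by
    rcases le_total (q b) t with h | h
    · rw [max_eq_right (by linarith), max_eq_left (by linarith)]; ring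
    · rw [max_eq_left (by linarith), max_eq_right (by linarith)]; ring
  have hmean :
      ∑ b, max (q b - t) 0 * x b - ∑ b, max (t - q b) 0 * x b = ∑ b, x b * q b - t := by
    simp_rw [← sum_sub_distrib, ← sub_mul, hsplit, sub_mul, sum_sub_distrib, ← mul_sum, hx,
      mul_comm (q _)]
    ring
  simp only [rewardModification, hl, hu]
  linarith [hsplit a]

theorem sum_mul_sub_eq_zero {x q : A → ℝ} {c : ℝ} (hx : ∑ a, x a = 1)
    (hc : c = ∑ a, x a * q a) : ∑ a, x a * (q a - c) = 0 := by
  rw [hc]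
  simp only [mul_sub, sum_sub_distrib, ← sum_mul, hx, one_mul, sub_self]

def stateKernel (π : S → A → ℝ) (τ : S → A → S → ℝ) (s s' : S) : ℝ :=
  ∑ a, π s a * τ s a s'

theorem IsPolicy.stateKernel_nonneg {π : S → A → ℝ} {τ : S → A → S → ℝ} (hπ : IsPolicy π)
    (hτ0 : ∀ s a s', 0 ≤ τ s a s') (s s' : S) : 0 ≤ stateKernel π τ s s' :=
  sum_nonneg fun a _ => mul_nonneg (hπ.1 s a) (hτ0 s a s')

end Actions

variable [Fintype S] [Fintype A]

section Stochastic

variable {P : S → S → ℝ} {γ : ℝ}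

theorem exists_eq_add_mul_sum_stochastic (hP0 : ∀ s s', 0 ≤ P s s')
    (hP1 : ∀ s, ∑ s', P s s' = 1) (hγ0 : 0 ≤ γ) (hγ1 : γ < 1) (c : S → ℝ) :
    ∃ v : S → ℝ, ∀ s, v s = c s + γ * ∑ s', P s s' * v s' := by
  let T : (S → ℝ) → S → ℝ := fun v s => c s + γ * ∑ s', P s s' * v s'
  have hT : ContractingWith ⟨γ, hγ0⟩ T := by
    refine ⟨hγ1, LipschitzWith.of_dist_le_mul fun v w =>
      (dist_pi_le_iff (by positivity)).2 fun s => ?_⟩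
    have hdiff : T v s - T w s = γ * ∑ s', P s s' * (v s' - w s') := by
      simp only [T, mul_sub, sum_sub_distrib]
      ring
    rw [Real.dist_eq, hdiff, abs_mul, abs_of_nonneg hγ0]
    exact mul_le_mul_of_nonneg_left (abs_sum_mul_le_of_stochastic (hP0 s) (hP1 s) fun s' =>
      (Real.dist_eq _ _).symm.le.trans (dist_le_pi_dist v w s')) hγ0
  exact ⟨_, congrFun hT.fixedPoint_isFixedPt.symm⟩

theorem exists_nonneg_eq_add_mul_sum_stochastic (hP0 : ∀ s s', 0 ≤ P s s')
    (hP1 : ∀ s, ∑ s', P s s' = 1) (hγ0 : 0 ≤ γ) (hγ1 : γ < 1) {c : S → ℝ}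
    (hc : ∀ s, 0 ≤ c s) :
    ∃ d : S → ℝ, (∀ s, 0 ≤ d s) ∧ ∀ s, d s = c s + γ * ∑ s', d s' * P s' s := by
  -- the transposed iteration contracts in the `ℓ¹` norm and preserves the nonnegative orthant
  let F : PiLp 1 (fun _ : S => ℝ) → PiLp 1 (fun _ : S => ℝ) :=
    fun d => WithLp.toLp 1 fun s => c s + γ * ∑ s', d s' * P s' s
  have hF : LipschitzWith ⟨γ, hγ0⟩ F := by
    refine LipschitzWith.of_dist_le_mul fun x y => ?_
    simp only [PiLp.dist_eq_of_L1, Real.dist_eq]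
    calc ∑ s, |F x s - F y s| = ∑ s, γ * |∑ s', (x s' - y s') * P s' s| := by
          refine sum_congr rfl fun s _ => ?_
          simp only [F, sub_mul, sum_sub_distrib, add_sub_add_left_eq_sub, ← mul_sub, abs_mul,
            abs_of_nonneg hγ0]
      _ ≤ ∑ s, γ * ∑ s', |x s' - y s'| * P s' s := by
          refine sum_le_sum fun s _ => mul_le_mul_of_nonneg_left ?_ hγ0
          refine (abs_sum_le_sum_abs _ _).trans_eq (sum_congr rfl fun s' _ => ?_)
          rw [abs_mul, abs_of_nonneg (hP0 s' s)]
      _ = γ * ∑ s', |x s' - y s'| := by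
          rw [← mul_sum, sum_comm]
          simp only [← mul_sum, hP1, mul_one]
  let K : Set (PiLp 1 (fun _ : S => ℝ)) := {d | ∀ s, 0 ≤ d s}
  have hK : IsClosed K := by
    simp only [K, Set.ofPred_forall]
    exact isClosed_iInter fun s =>
      isClosed_le continuous_const ((continuous_apply s).comp (PiLp.continuous_ofLp 1 _))
  have hFK : Set.MapsTo F K K := fun d hd s =>
    add_nonneg (hc s) (mul_nonneg hγ0 (sum_nonneg fun s' _ => mul_nonneg (hd s') (hP0 s' s)))
  obtain ⟨d, hdK, hfix, -⟩ := ContractingWith.exists_fixedPoint' hK.isComplete hFK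
    (f := F) ⟨hγ1, fun x y => hF x y⟩ (x := 0) (fun _ => le_rfl) (edist_ne_top _ _)
  exact ⟨d, hdK, fun s => congrArg (· s) hfix.symm⟩

end Stochastic

def expectedReward (τ : S → A → S → ℝ) (r : S → A → S → ℝ) (s : S) (a : A) : ℝ :=
  ∑ s', τ s a s' * r s a s'

def qValue (τ : S → A → S → ℝ) (R : S → A → ℝ) (γ : ℝ) (v : S → ℝ) (s : S) (a : A) : ℝ :=
  R s a + γ * ∑ s', τ s a s' * v s'

theorem sum_mul_qValue_sub_eq {ι : S → ℝ} {τ : S → A → S → ℝ} {γ : ℝ} {d : S → ℝ}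
    {p : S → A → ℝ} (hsum : ∀ s, ∑ a, p s a = d s)
    (hflow : ∀ s, d s = (1 - γ) * ι s + γ * ∑ s', ∑ a', p s' a' * τ s' a' s)
    (R : S → A → ℝ) (v : S → ℝ) :
    ∑ s, ∑ a, p s a * (qValue τ R γ v s a - v s)
      = ∑ s, ∑ a, p s a * R s a - ∑ s, ι s * ((1 - γ) * v s) := by
  have hinflow : ∀ s', γ * ∑ s, ∑ a, p s a * τ s a s' = d s' - (1 - γ) * ι s' :=
    fun s' => by linarith [hflow s']
  have hnext : ∑ s, ∑ a, p s a * (γ * ∑ s', τ s a s' * v s')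
      = ∑ s', (d s' - (1 - γ) * ι s') * v s' := by
    simp_rw [← hinflow, mul_sum, sum_mul]
    rw [sum_comm_cycle]
    exact sum_congr rfl fun _ _ => sum_congr rfl fun _ _ => sum_congr rfl fun _ _ => by ring
  have hstay : ∑ s, ∑ a, p s a * v s = ∑ s, d s * v s :=
    sum_congr rfl fun s _ => by rw [← sum_mul, hsum]
  simp only [qValue, mul_sub, mul_add, sum_add_distrib, sum_sub_distrib]
  rw [hnext, hstay, add_sub_assoc, ← sum_sub_distrib, sub_eq_add_neg _ (∑ s, _),
    ← sum_neg_distrib]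
  exact congrArg _ (sum_congr rfl fun s _ => by ring)

section Policy

variable {ι : S → ℝ} {τ : S → A → S → ℝ} {γ : ℝ} {π : S → A → ℝ}

theorem IsPolicy.sum_stateKernel (hπ : IsPolicy π) (hτ1 : ∀ s a, ∑ s', τ s a s' = 1) (s : S) :
    ∑ s', stateKernel π τ s s' = 1 := by
  simp only [stateKernel]
  rw [sum_comm]
  simp only [← mul_sum, hτ1, mul_one, hπ.2]

theorem IsPolicy.exists_value (hπ : IsPolicy π) (hτ0 : ∀ s a s', 0 ≤ τ s a s')
    (hτ1 : ∀ s a, ∑ s', τ s a s' = 1) (hγ0 : 0 ≤ γ) (hγ1 : γ < 1) (R : S → A → ℝ) :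
    ∃ v : S → ℝ, ∀ s, v s = ∑ a, π s a * qValue τ R γ v s a := by
  obtain ⟨v, hv⟩ := exists_eq_add_mul_sum_stochastic (hπ.stateKernel_nonneg hτ0)
    (hπ.sum_stateKernel hτ1) hγ0 hγ1 fun s => ∑ a, π s a * R s a
  refine ⟨v, fun s => (hv s).trans ?_⟩
  simp only [qValue, stateKernel, mul_add, sum_add_distrib, mul_sum, sum_mul]
  rw [sum_comm (s := univ (α := S))]
  exact congrArg _ (sum_congr rfl fun a _ => sum_congr rfl fun s' _ => by ring)

theorem IsPolicy.exists_isVisit (hπ : IsPolicy π) (hτ0 : ∀ s a s', 0 ≤ τ s a s')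
    (hτ1 : ∀ s a, ∑ s', τ s a s' = 1) (hγ0 : 0 ≤ γ) (hγ1 : γ < 1) (hι : ∀ s, 0 ≤ ι s) :
    ∃ d : S → ℝ, (∀ s, 0 ≤ d s) ∧ IsVisit ι τ γ π d := by
  obtain ⟨d, hd0, hd⟩ := exists_nonneg_eq_add_mul_sum_stochastic
    (hπ.stateKernel_nonneg hτ0) (hπ.sum_stateKernel hτ1) hγ0 hγ1
    fun s => mul_nonneg (sub_nonneg.2 hγ1.le) (hι s)
  refine ⟨d, hd0, fun s => (hd s).trans ?_⟩
  simp only [stateKernel, mul_sum, mul_assoc]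

theorem DualFeas.of_isVisit (hπ : IsPolicy π) {d : S → ℝ} (hd0 : ∀ s, 0 ≤ d s)
    (hd : IsVisit ι τ γ π d) : DualFeas ι τ γ d fun s a => d s * π s a :=
  ⟨fun s => by rw [← mul_sum, hπ.2, mul_one], hd, fun s a => mul_nonneg (hd0 s) (hπ.1 s a)⟩

theorem DualFeas.pos {d : S → ℝ} {p : S → A → ℝ} (h : DualFeas ι τ γ d p)
    (hι : ∀ s, 0 < ι s) (hτ0 : ∀ s a s', 0 ≤ τ s a s') (hγ0 : 0 ≤ γ) (hγ1 : γ < 1) (s : S) :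
    0 < d s := by
  rw [h.2.1 s]
  exact add_pos_of_pos_of_nonneg (mul_pos (sub_pos.2 hγ1) (hι s)) <| mul_nonneg hγ0 <|
    sum_nonneg fun s' _ => sum_nonneg fun a' _ => mul_nonneg (h.2.2 s' a') (hτ0 s' a' s)

end Policy

section Duality

variable {ι : S → ℝ} {τ : S → A → S → ℝ} {γ : ℝ} {r : S → A → S → ℝ} {πlb πub : S → A → ℝ}
  {π : S → A → ℝ} {d v : S → ℝ} {p : S → A → ℝ}

def BoundedDualFeas (ι : S → ℝ) (τ : S → A → S → ℝ) (γ : ℝ) (πlb πub : S → A → ℝ) (d : S → ℝ)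
    (p : S → A → ℝ) : Prop :=
  DualFeas ι τ γ d p ∧ ∀ s a, d s * πlb s a ≤ p s a ∧ p s a ≤ d s * πub s a

def PrimalFeas (τ : S → A → S → ℝ) (r : S → A → S → ℝ) (γ : ℝ) (πlb πub : S → A → ℝ)
    (v : S → ℝ) (q rlb rub : S → A → ℝ) : Prop :=
  (∀ s a, q s a ≤ v s) ∧
  (∀ s a, q s a = ∑ s', τ s a s' *
    (r s a s' + rlb s a - (∑ b, rlb s b * πlb s b) -
      rub s a + (∑ b, rub s b * πub s b) + γ * v s')) ∧
  (∀ s a, 0 ≤ rlb s a) ∧ ∀ s a, 0 ≤ rub s a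

theorem sum_mul_modifiedReward_eq_qValue_add (hτ1 : ∀ s a, ∑ s', τ s a s' = 1) (rlb rub : S → A → ℝ)
    (s : S) (a : A) :
    ∑ s', τ s a s' * (r s a s' + rlb s a - (∑ b, rlb s b * πlb s b) -
      rub s a + (∑ b, rub s b * πub s b) + γ * v s')
      = qValue τ (expectedReward τ r) γ v s a
        + rewardModification (πlb s) (πub s) (rlb s) (rub s) a := by
  simp only [qValue, expectedReward, rewardModification, mul_add, mul_sub, sum_add_distrib,
    sum_sub_distrib, ← sum_mul, hτ1, mul_left_comm (τ s a _) γ, ← mul_sum, one_mul]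
  ring

theorem DualFeas.dualObj_sub_eq (h : DualFeas ι τ γ d p) (hpπ : ∀ s a, p s a = d s * π s a)
    (r : S → A → S → ℝ) (v : S → ℝ) :
    DualObj τ r p - ∑ s, ι s * ((1 - γ) * v s)
      = ∑ s, d s * ∑ a, π s a * (qValue τ (expectedReward τ r) γ v s a - v s) := by
  have hobj : DualObj τ r p = ∑ s, ∑ a, p s a * expectedReward τ r s a := rfl
  rw [hobj, ← sum_mul_qValue_sub_eq h.1 h.2.1]
  simp only [hpπ, mul_sum, mul_assoc]

theorem DualFeas.dualObj_eq_of_value (h : DualFeas ι τ γ d p) (hpπ : ∀ s a, p s a = d s * π s a)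
    (hπ1 : ∀ s, ∑ a, π s a = 1)
    (hv : ∀ s, v s = ∑ a, π s a * qValue τ (expectedReward τ r) γ v s a) :
    DualObj τ r p = ∑ s, ι s * ((1 - γ) * v s) := by
  have := h.dualObj_sub_eq hpπ r v
  simp only [sum_mul_sub_eq_zero (hπ1 _) (hv _), mul_zero, sum_const_zero] at this
  linarith

theorem exists_boundedDualFeas_dualObj_gt [DecidableEq S] [DecidableEq A]
    (hι : ∀ s, 0 < ι s) (hτ0 : ∀ s a s', 0 ≤ τ s a s') (hτ1 : ∀ s a, ∑ s', τ s a s' = 1)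
    (hγ0 : 0 ≤ γ) (hγ1 : γ < 1) (hlb0 : ∀ s a, 0 ≤ πlb s a) (hπ1 : ∀ s, ∑ a, π s a = 1)
    (hπb : ∀ s a, π s a ∈ Set.Icc (πlb s a) (πub s a))
    (hv : ∀ s, v s = ∑ a, π s a * qValue τ (expectedReward τ r) γ v s a)
    {s₀ : S} {a b : A} (ha : πlb s₀ a < π s₀ a) (hb : π s₀ b < πub s₀ b)
    (hab : qValue τ (expectedReward τ r) γ v s₀ a < qValue τ (expectedReward τ r) γ v s₀ b) :
    ∃ d p, BoundedDualFeas ι τ γ πlb πub d p ∧ ∑ s, ι s * ((1 - γ) * v s) < DualObj τ r p := by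
  set q := qValue τ (expectedReward τ r) γ v
  have hne : a ≠ b := by
    rintro rfl
    exact lt_irrefl _ hab
  set ε := min (π s₀ a - πlb s₀ a) (πub s₀ b - π s₀ b)
  have hε : 0 < ε := lt_min (sub_pos.2 ha) (sub_pos.2 hb)
  set π' := Function.update π s₀ (moveMass (π s₀) a b ε)
  have hπ'b : ∀ s c, π' s c ∈ Set.Icc (πlb s c) (πub s c) := by
    intro s c
    rcases eq_or_ne s s₀ with rfl | hs
    · simpa [π'] using
        moveMass_mem_Icc (hπb s) hne hε.le (min_le_left _ _) (min_le_right _ _) c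
    · simpa [π', hs] using hπb s c
  have hπ' : IsPolicy π' := by
    refine ⟨fun s c => (hlb0 s c).trans (hπ'b s c).1, fun s => ?_⟩
    rcases eq_or_ne s s₀ with rfl | hs
    · simp [π', sum_moveMass, hπ1]
    · simp [π', hs, hπ1]
  obtain ⟨d, hd0, hd⟩ := hπ'.exists_isVisit hτ0 hτ1 hγ0 hγ1 fun s => (hι s).le
  have hdual := DualFeas.of_isVisit hπ' hd0 hd
  refine ⟨d, _, ⟨hdual, fun s c => ⟨mul_le_mul_of_nonneg_left (hπ'b s c).1 (hd0 s),
    mul_le_mul_of_nonneg_left (hπ'b s c).2 (hd0 s)⟩⟩, ?_⟩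
  have hgain : ∑ s, d s * ∑ c, π' s c * (q s c - v s) = d s₀ * (ε * (q s₀ b - q s₀ a)) := by
    rw [sum_eq_single s₀]
    · simp [π', sum_moveMass_mul, sum_mul_sub_eq_zero (hπ1 s₀) (hv s₀)]
    · intro s _ hs
      simp [π', hs, sum_mul_sub_eq_zero (hπ1 s) (hv s)]
    · simp
  have hpos : 0 < d s₀ * (ε * (q s₀ b - q s₀ a)) :=
    mul_pos (hdual.pos hι hτ0 hγ0 hγ1 s₀) (mul_pos hε (sub_pos.2 hab))
  linarith [hdual.dualObj_sub_eq (fun _ _ => rfl) r v]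

theorem qValue_le_of_dualOptimal (hι : ∀ s, 0 < ι s) (hτ0 : ∀ s a s', 0 ≤ τ s a s')
    (hτ1 : ∀ s a, ∑ s', τ s a s' = 1) (hγ0 : 0 ≤ γ) (hγ1 : γ < 1) (hlb0 : ∀ s a, 0 ≤ πlb s a)
    (hp : DualFeas ι τ γ d p) (hpπ : ∀ s a, p s a = d s * π s a)
    (hopt : ∀ d' p', BoundedDualFeas ι τ γ πlb πub d' p' → DualObj τ r p' ≤ DualObj τ r p)
    (hπ1 : ∀ s, ∑ a, π s a = 1) (hπb : ∀ s a, π s a ∈ Set.Icc (πlb s a) (πub s a))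
    (hv : ∀ s, v s = ∑ a, π s a * qValue τ (expectedReward τ r) γ v s a)
    (s : S) (a b : A) (ha : πlb s a < π s a) (hb : π s b < πub s b) :
    qValue τ (expectedReward τ r) γ v s b ≤ qValue τ (expectedReward τ r) γ v s a := by
  classical
  by_contra! hab
  obtain ⟨d', p', hfeas, hgt⟩ :=
    exists_boundedDualFeas_dualObj_gt hι hτ0 hτ1 hγ0 hγ1 hlb0 hπ1 hπb hv ha hb hab
  linarith [hopt d' p' hfeas, hp.dualObj_eq_of_value hpπ hπ1 hv]

theorem primalFeas_of_threshold (hτ1 : ∀ s a, ∑ s', τ s a s' = 1) (hπ1 : ∀ s, ∑ a, π s a = 1)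
    (hv : ∀ s, v s = ∑ a, π s a * qValue τ (expectedReward τ r) γ v s a) {t : S → ℝ}
    (hlow : ∀ s a, qValue τ (expectedReward τ r) γ v s a < t s → π s a = πlb s a)
    (hhigh : ∀ s a, t s < qValue τ (expectedReward τ r) γ v s a → π s a = πub s a) :
    PrimalFeas τ r γ πlb πub v (fun s _ => v s)
      (fun s a => max (t s - qValue τ (expectedReward τ r) γ v s a) 0)
      (fun s a => max (qValue τ (expectedReward τ r) γ v s a - t s) 0) := by
  set Q := qValue τ (expectedReward τ r) γ v
  refine ⟨fun _ _ => le_rfl, fun s a => ?_, fun _ _ => le_max_right _ _,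
    fun _ _ => le_max_right _ _⟩
  rw [sum_mul_modifiedReward_eq_qValue_add hτ1 (fun s a => max (t s - Q s a) 0)
    (fun s a => max (Q s a - t s) 0), add_rewardModification_eq (hπ1 s) (hlow s) (hhigh s)]
  exact hv s

theorem PrimalFeas.objective_eq {q rlb rub : S → A → ℝ}
    (hP : PrimalFeas τ r γ πlb πub v q rlb rub) (hD : BoundedDualFeas ι τ γ πlb πub d p)
    (hτ1 : ∀ s a, ∑ s', τ s a s' = 1) :
    ∑ s, ι s * ((1 - γ) * v s) = DualObj τ r p + ∑ s, ∑ a,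
      (rlb s a * (p s a - d s * πlb s a) + rub s a * (d s * πub s a - p s a)
        + p s a * (v s - q s a)) := by
  let R s a := expectedReward τ r s a + rewardModification (πlb s) (πub s) (rlb s) (rub s) a
  have hq : ∀ s a, q s a = qValue τ R γ v s a := fun s a => by
    rw [hP.2.1, sum_mul_modifiedReward_eq_qValue_add hτ1, qValue, qValue]
    ring
  have hR : ∑ s, ∑ a, p s a * R s a = DualObj τ r p + ∑ s, ∑ a,
      (rlb s a * (p s a - d s * πlb s a) + rub s a * (d s * πub s a - p s a)) := by
    simp only [R, mul_add, sum_add_distrib, sum_mul_rewardModification, hD.1.1]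
    rfl
  have hflow := sum_mul_qValue_sub_eq hD.1.1 hD.1.2.1 R v
  simp only [← hq] at hflow
  have hsplit : ∑ s, ∑ a, (rlb s a * (p s a - d s * πlb s a) + rub s a * (d s * πub s a - p s a)
        + p s a * (v s - q s a)) = ∑ s, ∑ a, (rlb s a * (p s a - d s * πlb s a)
        + rub s a * (d s * πub s a - p s a)) - ∑ s, ∑ a, p s a * (q s a - v s) := by
    simp only [← sum_sub_distrib]
    exact sum_congr rfl fun s _ => sum_congr rfl fun a _ => by ring
  linarith

theorem PrimalFeas.slack_eq_zero {q rlb rub : S → A → ℝ}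
    (hP : PrimalFeas τ r γ πlb πub v q rlb rub) (hD : BoundedDualFeas ι τ γ πlb πub d p)
    (hτ1 : ∀ s a, ∑ s', τ s a s' = 1) (hle : ∑ s, ι s * ((1 - γ) * v s) ≤ DualObj τ r p)
    (s : S) (a : A) :
    rlb s a * (p s a - d s * πlb s a) = 0 ∧ rub s a * (d s * πub s a - p s a) = 0 := by
  have hl : ∀ s a, 0 ≤ rlb s a * (p s a - d s * πlb s a) :=
    fun s a => mul_nonneg (hP.2.2.1 s a) (sub_nonneg.2 (hD.2 s a).1)
  have hu : ∀ s a, 0 ≤ rub s a * (d s * πub s a - p s a) :=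
    fun s a => mul_nonneg (hP.2.2.2 s a) (sub_nonneg.2 (hD.2 s a).2)
  have hw : ∀ s a, 0 ≤ p s a * (v s - q s a) :=
    fun s a => mul_nonneg (hD.1.2.2 s a) (sub_nonneg.2 (hP.1 s a))
  have hterm := (single_le_sum (fun a _ => add_nonneg (add_nonneg (hl s a) (hu s a)) (hw s a))
    (mem_univ a)).trans (single_le_sum (fun s _ => sum_nonneg fun a _ =>
      add_nonneg (add_nonneg (hl s a) (hu s a)) (hw s a)) (mem_univ s))
  rw [hP.objective_eq hD hτ1] at hle
  constructor <;> linarith [hl s a, hu s a, hw s a]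

theorem BoundedDualFeas.div_policy (h : BoundedDualFeas ι τ γ πlb πub d p) (hd : ∀ s, 0 < d s) :
    (∀ s a, p s a = d s * (p s a / d s)) ∧ (∀ s, ∑ a, p s a / d s = 1) ∧
      ∀ s a, p s a / d s ∈ Set.Icc (πlb s a) (πub s a) := by
  refine ⟨fun s a => (mul_div_cancel₀ _ (hd s).ne').symm,
    fun s => by rw [← sum_div, h.1.1, div_self (hd s).ne'], fun s a => ⟨?_, ?_⟩⟩
  · rw [le_div_iff₀ (hd s), mul_comm]
    exact (h.2 s a).1
  · rw [div_le_iff₀ (hd s), mul_comm]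
    exact (h.2 s a).2

end Duality

end

theorem adb_reward_modifications_tight_only_general
    {S A : Type*} [Fintype S] [Fintype A]
    (ι : S → ℝ) (τ : S → A → S → ℝ) (γ : ℝ) (r : S → A → S → ℝ)
    (hMDP : IsMDP ι τ γ)
    (πlb πub : S → A → ℝ) (hlb0 : ∀ s a, 0 ≤ πlb s a)
    (dStar : S → ℝ) (pStar : S → A → ℝ)
    (hDFeas : DualFeas ι τ γ dStar pStar ∧
      ∀ s a, dStar s * πlb s a ≤ pStar s a ∧ pStar s a ≤ dStar s * πub s a)
    (hDOpt : ∀ (d : S → ℝ) (p : S → A → ℝ),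
      (DualFeas ι τ γ d p ∧
        ∀ s a, d s * πlb s a ≤ p s a ∧ p s a ≤ d s * πub s a) →
      DualObj τ r p ≤ DualObj τ r pStar)
    (vStar : S → ℝ) (qStar rlbStar rubStar : S → A → ℝ)
    (hPFeas : (∀ s a, qStar s a ≤ vStar s) ∧
      (∀ s a, qStar s a = ∑ s', τ s a s' *
        (r s a s' + rlbStar s a - (∑ b, rlbStar s b * πlb s b) -
          rubStar s a + (∑ b, rubStar s b * πub s b) + γ * vStar s')) ∧
      (∀ s a, 0 ≤ rlbStar s a) ∧ ∀ s a, 0 ≤ rubStar s a)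
    (hPOpt : ∀ (v : S → ℝ) (q rlb rub : S → A → ℝ),
      ((∀ s a, q s a ≤ v s) ∧
        (∀ s a, q s a = ∑ s', τ s a s' *
          (r s a s' + rlb s a - (∑ b, rlb s b * πlb s b) -
            rub s a + (∑ b, rub s b * πub s b) + γ * v s')) ∧
        (∀ s a, 0 ≤ rlb s a) ∧ ∀ s a, 0 ≤ rub s a) →
      ∑ s, ι s * ((1 - γ) * vStar s) ≤ ∑ s, ι s * ((1 - γ) * v s)) :
    (∀ s a, πlb s a < pStar s a / dStar s → rlbStar s a = 0) ∧
    (∀ s a, pStar s a / dStar s < πub s a → rubStar s a = 0) := by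
  obtain ⟨hι, -, hτ0, hτ1, hγ0, hγ1⟩ := hMDP
  have hd := hDFeas.1.pos hι hτ0 hγ0 hγ1
  obtain ⟨hpπ, hπ1, hπb⟩ := BoundedDualFeas.div_policy hDFeas hd
  obtain ⟨v, hv⟩ := IsPolicy.exists_value ⟨fun s a => (hlb0 s a).trans (hπb s a).1, hπ1⟩
    hτ0 hτ1 hγ0 hγ1 (expectedReward τ r)
  have hgreedy := qValue_le_of_dualOptimal hι hτ0 hτ1 hγ0 hγ1 hlb0 hDFeas.1 hpπ hDOpt hπ1 hπb hv
  choose t hlow hhigh using fun s =>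
    exists_threshold (fun a => (hπb s a).1) (fun a => (hπb s a).2) (hgreedy s)
  have hle := (hPOpt _ _ _ _ (primalFeas_of_threshold hτ1 hπ1 hv hlow hhigh)).trans_eq
    (hDFeas.1.dualObj_eq_of_value hpπ hπ1 hv).symm
  have hslack := PrimalFeas.slack_eq_zero hPFeas hDFeas hτ1 hle
  refine ⟨fun s a h => ?_, fun s a h => ?_⟩
  · rw [lt_div_iff₀ (hd s), mul_comm] at h
    exact (mul_eq_zero.1 (hslack s a).1).resolve_right (sub_pos.2 h).ne'
  · rw [div_lt_iff₀ (hd s), mul_comm] at h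
    exact (mul_eq_zero.1 (hslack s a).2).resolve_right (sub_pos.2 h).ne'

/-- given optimal solutions of the (feasible) action-density-bounded dual
and primal LPs, the optimal reward modifications vanish at non-tight action density
bounds: `r_lb*(s,a) = 0` wherever `π_lb(a|s) < π*(a|s)` and `r_ub*(s,a) = 0` wherever
`π*(a|s) < π_ub(a|s)`, with `π* = p*/d*`. -/
theorem adb_reward_modifications_tight_only
    {S A : Type*} [Fintype S] [Fintype A] [Nonempty S] [Nonempty A]
    (ι : S → ℝ) (τ : S → A → S → ℝ) (γ : ℝ) (r : S → A → S → ℝ)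
    (hMDP : IsMDP ι τ γ)
    (πlb πub : S → A → ℝ) (hlb0 : ∀ s a, 0 ≤ πlb s a)
    (hlb1 : ∀ s, ∑ a, πlb s a ≤ 1) (hub1 : ∀ s, 1 ≤ ∑ a, πub s a)
    (dStar : S → ℝ) (pStar : S → A → ℝ)
    (hDFeas : DualFeas ι τ γ dStar pStar ∧
      ∀ s a, dStar s * πlb s a ≤ pStar s a ∧ pStar s a ≤ dStar s * πub s a)
    (hDOpt : ∀ (d : S → ℝ) (p : S → A → ℝ),
      (DualFeas ι τ γ d p ∧
        ∀ s a, d s * πlb s a ≤ p s a ∧ p s a ≤ d s * πub s a) →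
      DualObj τ r p ≤ DualObj τ r pStar)
    (vStar : S → ℝ) (qStar rlbStar rubStar : S → A → ℝ)
    (hPFeas : (∀ s a, qStar s a ≤ vStar s) ∧
      (∀ s a, qStar s a = ∑ s', τ s a s' *
        (r s a s' + rlbStar s a - (∑ b, rlbStar s b * πlb s b) -
          rubStar s a + (∑ b, rubStar s b * πub s b) + γ * vStar s')) ∧
      (∀ s a, 0 ≤ rlbStar s a) ∧ ∀ s a, 0 ≤ rubStar s a)
    (hPOpt : ∀ (v : S → ℝ) (q rlb rub : S → A → ℝ),
      ((∀ s a, q s a ≤ v s) ∧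
        (∀ s a, q s a = ∑ s', τ s a s' *
          (r s a s' + rlb s a - (∑ b, rlb s b * πlb s b) -
            rub s a + (∑ b, rub s b * πub s b) + γ * v s')) ∧
        (∀ s a, 0 ≤ rlb s a) ∧ ∀ s a, 0 ≤ rub s a) →
      ∑ s, ι s * ((1 - γ) * vStar s) ≤ ∑ s, ι s * ((1 - γ) * v s)) :
    (∀ s a, πlb s a < pStar s a / dStar s → rlbStar s a = 0) ∧
    (∀ s a, pStar s a / dStar s < πub s a → rubStar s a = 0) :=
  adb_reward_modifications_tight_only_general ι τ γ r hMDP πlb πub hlb0 dStar pStar hDFeas hDOpt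
    vStar qStar rlbStar rubStar hPFeas hPOpt
end

section
/- Assume the transition-constrained dual LP is feasible. Let (d*, p*) be an optimal solution of the transition-constrained dual LP. Then d*(s) > 0 for every state s, and the policy π*(a|s) = p*(s,a)/d*(s) satisfies the average transition constraints p^{π*}(s,a)·c̄(s,a) ≤ 0 for all s,a and maximizes the average reward ρ^π among all policies satisfying these constraints. -/
open Finset

/-- an optimal solution `(d*, p*)` of the (feasible)
transition-constrained dual LP has `d* > 0` everywhere, and the derived policy
`π* = p*/d*` satisfies the average transition constraints `p^{π*}(s,a)·c̄(s,a) ≤ 0` and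
maximizes the average reward among all policies satisfying them. -/
theorem atc_dual_gives_optimal_policy
    {S A : Type*} [Fintype S] [Fintype A] [Nonempty S] [Nonempty A]
    (ι : S → ℝ) (τ : S → A → S → ℝ) (γ : ℝ) (r : S → A → S → ℝ)
    (hMDP : IsMDP ι τ γ)
    (c : S → A → S → ℝ)
    (dStar : S → ℝ) (pStar : S → A → ℝ)
    (hFeas : DualFeas ι τ γ dStar pStar ∧
      ∀ s a, pStar s a * (∑ s', τ s a s' * c s a s') ≤ 0)
    (hOpt : ∀ (d : S → ℝ) (p : S → A → ℝ),
      (DualFeas ι τ γ d p ∧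
        ∀ s a, p s a * (∑ s', τ s a s' * c s a s') ≤ 0) →
      DualObj τ r p ≤ DualObj τ r pStar) :
    (∀ s, 0 < dStar s) ∧
    IsPolicy (fun s a => pStar s a / dStar s) ∧
    IsVisit ι τ γ (fun s a => pStar s a / dStar s) dStar ∧
    (∀ s a, dStar s * (pStar s a / dStar s) * (∑ s', τ s a s' * c s a s') ≤ 0) ∧
    (∀ (π : S → A → ℝ) (d : S → ℝ), IsPolicy π → IsVisit ι τ γ π d →
      (∀ s a, d s * π s a * (∑ s', τ s a s' * c s a s') ≤ 0) →
      DualObj τ r (fun s a => d s * π s a) ≤ DualObj τ r pStar) := by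
  obtain ⟨hι, hιsum, hτ, hτsum, hγ0, hγ1⟩ := hMDP
  obtain ⟨⟨hsum, hvisit, hpos⟩, hc⟩ := hFeas
  have hd : ∀ s, 0 < dStar s := by
    intro s
    rw [hvisit s]
    have h1 : 0 < (1 - γ) * ι s := mul_pos (by linarith) (hι s)
    have h2 : 0 ≤ γ * ∑ s', ∑ a', pStar s' a' * τ s' a' s :=
      mul_nonneg hγ0 (Finset.sum_nonneg fun s' _ => Finset.sum_nonneg fun a' _ =>
        mul_nonneg (hpos s' a') (hτ s' a' s))
    linarith
  have key : ∀ s' a', dStar s' * (pStar s' a' / dStar s') = pStar s' a' := by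
    intro s' a'
    rw [mul_div_assoc']
    exact mul_div_cancel_left₀ _ (hd s').ne'
  refine ⟨hd, ⟨fun s a => div_nonneg (hpos s a) (hd s).le, fun s => by
      rw [← Finset.sum_div, hsum s, div_self (hd s).ne']⟩, ?_, ?_, ?_⟩
  · intro s
    simp only [key]
    exact hvisit s
  · intro s a
    rw [key s a]
    exact hc s a
  · intro π d hπ hvis hcon
    obtain ⟨hπ0, hπ1⟩ := hπ
    -- nonnegativity of d via negative parts
    set f : S → ℝ := fun s => max (-(d s)) 0 with hf
    have hf0 : ∀ s, 0 ≤ f s := fun s => le_max_right _ _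
    have hstep : ∀ s, f s ≤ γ * ∑ s', f s' * ∑ a', π s' a' * τ s' a' s := by
      intro s
      have hM : ∀ s', (-(f s')) * ∑ a', π s' a' * τ s' a' s ≤
          ∑ a', d s' * π s' a' * τ s' a' s := by
        intro s'
        have h1 : -(f s') ≤ d s' := by
          simp only [hf]
          rcases le_total (d s') 0 with h | h
          · rw [max_eq_left (by linarith)]; linarith
          · rw [max_eq_right (by linarith)]; linarith
        calc (-(f s')) * ∑ a', π s' a' * τ s' a' s
            ≤ d s' * ∑ a', π s' a' * τ s' a' s := by
              apply mul_le_mul_of_nonneg_right h1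
              exact Finset.sum_nonneg fun a' _ => mul_nonneg (hπ0 s' a') (hτ s' a' s)
          _ = ∑ a', d s' * π s' a' * τ s' a' s := by
              rw [Finset.mul_sum]; exact Finset.sum_congr rfl fun a' _ => by ring
      have hRnn : 0 ≤ γ * ∑ s', f s' * ∑ a', π s' a' * τ s' a' s :=
        mul_nonneg hγ0 (Finset.sum_nonneg fun s' _ => mul_nonneg (hf0 s')
          (Finset.sum_nonneg fun a' _ => mul_nonneg (hπ0 s' a') (hτ s' a' s)))
      have hlow : -(d s) ≤ γ * ∑ s', f s' * ∑ a', π s' a' * τ s' a' s := by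
        have hv := hvis s
        have hsb : ∑ s', (-(f s')) * ∑ a', π s' a' * τ s' a' s ≤
            ∑ s', ∑ a', d s' * π s' a' * τ s' a' s :=
          Finset.sum_le_sum fun s' _ => hM s'
        have hιs : 0 ≤ (1 - γ) * ι s := mul_nonneg (by linarith) (hι s).le
        have hγs : γ * ∑ s', (-(f s')) * ∑ a', π s' a' * τ s' a' s ≤
            γ * ∑ s', ∑ a', d s' * π s' a' * τ s' a' s :=
          mul_le_mul_of_nonneg_left hsb hγ0
        have heq : ∑ s', (-(f s')) * ∑ a', π s' a' * τ s' a' s =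
            -∑ s', f s' * ∑ a', π s' a' * τ s' a' s := by
          simp [neg_mul]
        rw [heq] at hγs
        nlinarith [hγs, hv, hιs]
      exact max_le hlow hRnn
    have hsumle : ∑ s, f s ≤ γ * ∑ s, f s := by
      calc ∑ s, f s ≤ ∑ s, γ * ∑ s', f s' * ∑ a', π s' a' * τ s' a' s :=
            Finset.sum_le_sum fun s _ => hstep s
        _ = γ * ∑ s, ∑ s', f s' * ∑ a', π s' a' * τ s' a' s := by
            rw [Finset.mul_sum]
        _ = γ * ∑ s', ∑ s, f s' * ∑ a', π s' a' * τ s' a' s := by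
            rw [Finset.sum_comm]
        _ = γ * ∑ s', f s' := by
            congr 1
            refine Finset.sum_congr rfl fun s' _ => ?_
            have : ∑ s, f s' * ∑ a', π s' a' * τ s' a' s
                = f s' * ∑ a', π s' a' * ∑ s, τ s' a' s := by
              rw [← Finset.mul_sum, Finset.sum_comm]
              congr 1
              exact Finset.sum_congr rfl fun a' _ => by rw [← Finset.mul_sum]
            rw [this]
            simp only [hτsum, mul_one, hπ1, mul_one]
    have hfsum0 : ∑ s, f s = 0 := by
      have h0 : 0 ≤ ∑ s, f s := Finset.sum_nonneg fun s _ => hf0 s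
      nlinarith
    have hdnn : ∀ s, 0 ≤ d s := by
      intro s
      have : f s = 0 := by
        have := Finset.sum_eq_zero_iff_of_nonneg (fun s _ => hf0 s) |>.mp hfsum0 s
          (Finset.mem_univ s)
        exact this
      have : -(d s) ≤ 0 := by
        rw [← this]; exact le_max_left _ _
      linarith
    apply hOpt d (fun s a => d s * π s a)
    refine ⟨⟨?_, ?_, ?_⟩, hcon⟩
    · intro s
      rw [← Finset.mul_sum, hπ1 s, mul_one]
    · intro s
      exact hvis s
    · intro s a
      exact mul_nonneg (hdnn s) (hπ0 s a)
end
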